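/- arXiv:1907.01071 — 3 statements merged into one kernel-verified Lean document; each statement's English description precedes it below -/
import Mathlib

section
/- Let L, U, Ψ, C be positive real numbers with 2ΨU > L, let p(y) = (L/(2Ψ))·(2ΨU/L)^(y/C), and let α be a real number with α ≥ ln(2ΨU/L) and α > 0. Then for every y ∈ [0, C], the Differential Allocation-Payment Relationship holds with zero marginal cost and conjugate derivative C: p(y) ≥ (1/α)·C·(deriv p y); equivalently α·p(y) ≥ C·p(y)·ln(2ΨU/L)/C, with equality when α = ln(2ΨU/L). -/
/-!
The dual update solves the linear ODE `C · p' = ln(2ΨU/L) · p`, so `(1/α) · C · p'(y)` is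
`p(y)` scaled by `ln(2ΨU/L) / α ≤ 1`; since `p > 0`, this is at most `p(y)`, with equality
exactly when `α = ln(2ΨU/L)`.
-/

open Real

theorem hasDerivAt_const_mul_rpow_div {b : ℝ} (hb : 0 < b) (c C y : ℝ) :
    HasDerivAt (fun x => c * b ^ (x / C)) (c * (log b * (1 / C) * b ^ (y / C))) y :=
  (((hasDerivAt_id y).div_const C).const_rpow hb).const_mul c

theorem mul_deriv_const_mul_rpow_div {b C : ℝ} (hb : 0 < b) (hC : C ≠ 0) (c y : ℝ) :
    C * deriv (fun x => c * b ^ (x / C)) y = log b * (c * b ^ (y / C)) := by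
  rw [(hasDerivAt_const_mul_rpow_div hb c C y).deriv]
  field_simp

theorem dual_update_allocation_payment_general
    (L U Ψ C : ℝ) (hL : 0 < L) (hΨ : 0 < Ψ) (hC : 0 < C)
    (hUL : 2 * Ψ * U > L)
    (p : ℝ → ℝ)
    (hp : ∀ y, p y = (L / (2 * Ψ)) * (2 * Ψ * U / L) ^ (y / C))
    (α : ℝ) (hα : α ≥ Real.log (2 * Ψ * U / L)) :
    ∀ y ∈ Set.Icc (0 : ℝ) C,
      p y ≥ (1 / α) * C * deriv p y ∧
      (α = Real.log (2 * Ψ * U / L) → p y = (1 / α) * C * deriv p y) := by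
  intro y _
  set b := 2 * Ψ * U / L
  have hb : 1 < b := (one_lt_div hL).2 hUL
  have hα0 : 0 < α := (log_pos hb).trans_le hα
  have hpy : 0 ≤ p y := by rw [hp]; positivity
  have hode : C * deriv p y = log b * p y := by
    rw [show p = _ from funext hp, mul_deriv_const_mul_rpow_div (zero_lt_one.trans hb) hC.ne']
  have hscaled : (1 / α) * C * deriv p y = log b / α * p y := by
    rw [mul_assoc, hode]
    ring
  refine ⟨?_, fun hαb => ?_⟩
  · rw [hscaled]
    exact mul_le_of_le_one_left hpy ((div_le_one hα0).2 hα)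
  · rw [hscaled, ← hαb, div_self hα0.ne', one_mul]

/-- The Differential Allocation-Payment Relationship for the
exponential dual update with zero marginal cost and conjugate derivative `C`:
`p(y) ≥ (1/α)·C·(deriv p y)` on `[0, C]`, with equality when `α = ln(2ΨU/L)`. -/
theorem dual_update_allocation_payment
    (L U Ψ C : ℝ) (hL : 0 < L) (hU : 0 < U) (hΨ : 0 < Ψ) (hC : 0 < C)
    (hUL : 2 * Ψ * U > L)
    (p : ℝ → ℝ)
    (hp : ∀ y, p y = (L / (2 * Ψ)) * (2 * Ψ * U / L) ^ (y / C))
    (α : ℝ) (hα : α ≥ Real.log (2 * Ψ * U / L)) (hα0 : 0 < α) :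
    ∀ y ∈ Set.Icc (0 : ℝ) C,
      p y ≥ (1 / α) * C * deriv p y ∧
      (α = Real.log (2 * Ψ * U / L) → p y = (1 / α) * C * deriv p y) :=
  dual_update_allocation_payment_general L U Ψ C hL hΨ hC hUL p hp α hα
end

section
/- Let π ≥ 0, let L, U satisfy π < L ≤ U with 2Ψ(U − π) > L − π for a scale parameter Ψ > 0, and let K > 0. Define q(y) = ((L − π)/(2Ψ))·(2Ψ(U − π)/(L − π))^(y/K) + π. Then q is differentiable with derivative q'(y) = (q(y) − π)·ln(2Ψ(U − π)/(L − π))/K, and for every real α with α ≥ ln(2Ψ(U − π)/(L − π)) and α > 0, and every y ∈ [0, K], the Differential Allocation-Payment Relationship with marginal cost π and conjugate derivative K holds: q(y) − π ≥ (1/α)·K·(deriv q y). -/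
/-- Second branch of the generation dual update function:
`q(y) = ((L−π)/(2Ψ))·(2Ψ(U−π)/(L−π))^(y/K) + π` is differentiable with
`q'(y) = (q(y) − π)·ln(2Ψ(U−π)/(L−π))/K`, and satisfies the Differential
Allocation-Payment Relationship with marginal cost `π` and conjugate
derivative `K` on `[0, K]`. -/
theorem generation_dual_second_branch
    (L U π Ψ K : ℝ) (hπ : 0 ≤ π) (hπL : π < L) (hLU : L ≤ U)
    (hΨ : 0 < Ψ) (hK : 0 < K)
    (hUL : 2 * Ψ * (U - π) > L - π)
    (q : ℝ → ℝ)
    (hq : ∀ y, q y =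
      ((L - π) / (2 * Ψ)) * (2 * Ψ * (U - π) / (L - π)) ^ (y / K) + π) :
    (∀ y : ℝ, DifferentiableAt ℝ q y ∧
        deriv q y = (q y - π) * Real.log (2 * Ψ * (U - π) / (L - π)) / K) ∧
    (∀ α : ℝ, α ≥ Real.log (2 * Ψ * (U - π) / (L - π)) → 0 < α →
      ∀ y ∈ Set.Icc (0 : ℝ) K, q y - π ≥ (1 / α) * K * deriv q y) := by
  have hqf : q = fun y =>
      ((L - π) / (2 * Ψ)) * (2 * Ψ * (U - π) / (L - π)) ^ (y / K) + π :=
    funext hq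
  set c : ℝ := (L - π) / (2 * Ψ) with hc
  set b : ℝ := 2 * Ψ * (U - π) / (L - π) with hb
  have hLπ : 0 < L - π := sub_pos.mpr hπL
  have hc0 : 0 < c := div_pos hLπ (by linarith)
  have hb1 : 1 < b := (one_lt_div hLπ).mpr hUL
  have hb0 : 0 < b := lt_trans one_pos hb1
  have hlogb : 0 < Real.log b := Real.log_pos hb1
  have hderiv : ∀ y : ℝ, HasDerivAt q ((q y - π) * Real.log b / K) y := by
    intro y
    have h1 : HasDerivAt (fun y : ℝ => y / K) (1 / K) y := by
      simpa using (hasDerivAt_id y).div_const K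
    have h2 : HasDerivAt (fun y : ℝ => b ^ (y / K))
        (b ^ (y / K) * Real.log b * (1 / K)) y :=
      HasDerivAt.comp y (Real.hasStrictDerivAt_const_rpow hb0 (y / K)).hasDerivAt h1
    have h3 : HasDerivAt q (c * (b ^ (y / K) * Real.log b * (1 / K))) y := by
      rw [hqf]; exact (h2.const_mul c).add_const π
    have hqy : q y - π = c * b ^ (y / K) := by rw [hq y]; ring
    convert h3 using 1
    rw [hqy]; ring
  constructor
  · intro y
    exact ⟨(hderiv y).differentiableAt, (hderiv y).deriv⟩
  · intro α hα hα0 y hy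
    rw [(hderiv y).deriv]
    have hqy : 0 < q y - π := by
      have : 0 < c * b ^ (y / K) := mul_pos hc0 (Real.rpow_pos_of_pos hb0 _)
      have hqy' : q y - π = c * b ^ (y / K) := by rw [hq y]; ring
      linarith [hqy' ▸ this]
    have hKne : (K : ℝ) ≠ 0 := ne_of_gt hK
    have : (1 / α) * K * ((q y - π) * Real.log b / K)
        = (q y - π) * (Real.log b / α) := by field_simp
    rw [this]
    have h4 : Real.log b / α ≤ 1 := (div_le_one hα0).mpr hα
    nlinarith
end

section
/- Let φ ≥ 0, let L, U satisfy φ < L ≤ U with 2Ψ(U − φ) > L − φ for a scale parameter Ψ > 0, and let I > 0. Define o(y) = ((L − φ)/(2Ψ))·(2Ψ(U − φ)/(L − φ))^(y/I) + φ. Then o is differentiable with derivative o'(y) = (o(y) − φ)·ln(2Ψ(U − φ)/(L − φ))/I, and for every real α with α ≥ ln(2Ψ(U − φ)/(L − φ)) and α > 0, and every y ∈ [0, I], the Differential Allocation-Payment Relationship with marginal cost φ and conjugate derivative I holds: o(y) − φ ≥ (1/α)·I·(deriv o y). -/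
/-- The out-of-service dual update function
`o(y) = ((L−φ)/(2Ψ))·(2Ψ(U−φ)/(L−φ))^(y/I) + φ` is differentiable with
`o'(y) = (o(y) − φ)·ln(2Ψ(U−φ)/(L−φ))/I`, and satisfies the Differential
Allocation-Payment Relationship with marginal cost `φ` and conjugate
derivative `I` on `[0, I]`. -/
theorem out_of_service_dual_update
    (L U φ Ψ I : ℝ) (hφ : 0 ≤ φ) (hφL : φ < L) (hLU : L ≤ U)
    (hΨ : 0 < Ψ) (hI : 0 < I)
    (hUL : 2 * Ψ * (U - φ) > L - φ)
    (o : ℝ → ℝ)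
    (ho : ∀ y, o y =
      ((L - φ) / (2 * Ψ)) * (2 * Ψ * (U - φ) / (L - φ)) ^ (y / I) + φ) :
    (∀ y : ℝ, DifferentiableAt ℝ o y ∧
        deriv o y = (o y - φ) * Real.log (2 * Ψ * (U - φ) / (L - φ)) / I) ∧
    (∀ α : ℝ, α ≥ Real.log (2 * Ψ * (U - φ) / (L - φ)) → 0 < α →
      ∀ y ∈ Set.Icc (0 : ℝ) I, o y - φ ≥ (1 / α) * I * deriv o y) := by
  set b : ℝ := 2 * Ψ * (U - φ) / (L - φ) with hb
  have hLφ : 0 < L - φ := by linarith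
  have hbpos : 0 < b := div_pos (by nlinarith) hLφ
  have hc : 0 < (L - φ) / (2 * Ψ) := div_pos hLφ (by linarith)
  have hderiv : ∀ y, HasDerivAt o ((o y - φ) * Real.log b / I) y := by
    intro y
    have h1 : HasDerivAt (fun y : ℝ => y / I) (1 / I) y := by
      simpa using (hasDerivAt_id y).div_const I
    have h2 : HasDerivAt (fun y : ℝ => b ^ (y / I))
        (b ^ (y / I) * Real.log b * (1 / I)) y :=
      ((Real.hasStrictDerivAt_const_rpow hbpos (y / I)).hasDerivAt).comp y h1
    have h3 : HasDerivAt (fun y : ℝ => ((L - φ) / (2 * Ψ)) * b ^ (y / I) + φ)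
        (((L - φ) / (2 * Ψ)) * (b ^ (y / I) * Real.log b * (1 / I))) y :=
      (h2.const_mul _).add_const φ
    have heq : o = fun y : ℝ => ((L - φ) / (2 * Ψ)) * b ^ (y / I) + φ :=
      funext ho
    rw [heq]
    convert h3 using 1
    show ((L - φ) / (2 * Ψ) * b ^ (y / I) + φ - φ) * Real.log b / I = _
    ring
  constructor
  · intro y
    exact ⟨(hderiv y).differentiableAt, (hderiv y).deriv⟩
  · intro α hα hα0 y hy
    rw [(hderiv y).deriv]
    have hoy : 0 < o y - φ := by
      rw [ho y]
      have := Real.rpow_pos_of_pos hbpos (y / I)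
      have : 0 < ((L - φ) / (2 * Ψ)) * b ^ (y / I) := mul_pos hc this
      linarith
    have hlog : Real.log b / α ≤ 1 := by
      rw [div_le_one hα0]; exact hα
    have : (o y - φ) * (Real.log b / α) ≤ (o y - φ) * 1 :=
      mul_le_mul_of_nonneg_left hlog hoy.le
    calc (1 / α) * I * ((o y - φ) * Real.log b / I)
        = (o y - φ) * (Real.log b / α) := by field_simp
      _ ≤ o y - φ := by linarith
end
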